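/- arXiv:2402.15841 — 2 statements merged into one kernel-verified Lean document; each statement's English description precedes it below -/
import Mathlib

section
/- Let A ∈ ℂ^{m×m}, B ∈ ℂ^{n×m}, C ∈ ℂ^{m×n}, D ∈ ℂ^{n×n}, where A and D are group invertible, and let λ ∈ ℂ with λ ≠ −1. If B·A^π = 0, C·D^π = 0, A·C·D^# = λ·C and B·C·D^# = λ·D, then the block matrix M = [[A, C], [B, D]] ∈ ℂ^{(m+n)×(m+n)} is group invertible. -/
/-- `Y` is the group inverse of the matrix (or ring element) `X`. -/
def IsGroupInverse {A : Type*} [Ring A] (X Y : A) : Prop :=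
  X * Y * X = X ∧ Y * X * Y = Y ∧ X * Y = Y * X

private lemma conj_gi {A : Type*} [Ring A] {U V N Y : A} (hUV : U * V = 1) (hVU : V * U = 1)
    (h : IsGroupInverse N Y) : IsGroupInverse (U * N * V) (U * Y * V) := by
  obtain ⟨e1, e2, e3⟩ := h
  refine ⟨?_, ?_, ?_⟩
  · calc U * N * V * (U * Y * V) * (U * N * V)
        = U * (N * (V * U) * Y * (V * U) * N) * V := by noncomm_ring
      _ = U * (N * Y * N) * V := by rw [hVU]; noncomm_ring
      _ = U * N * V := by rw [e1]
  · calc U * Y * V * (U * N * V) * (U * Y * V)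
        = U * (Y * (V * U) * N * (V * U) * Y) * V := by noncomm_ring
      _ = U * (Y * N * Y) * V := by rw [hVU]; noncomm_ring
      _ = U * Y * V := by rw [e2]
  · calc U * N * V * (U * Y * V) = U * (N * (V * U) * Y) * V := by noncomm_ring
      _ = U * (N * Y) * V := by rw [hVU]; noncomm_ring
      _ = U * (Y * (V * U) * N) * V := by rw [hVU, e3]; noncomm_ring
      _ = U * Y * V * (U * N * V) := by noncomm_ring

open Matrix in
lemma tri_gi {m n : ℕ} (P Pd : Matrix (Fin m) (Fin m) ℂ) (Q : Matrix (Fin n) (Fin m) ℂ)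
    (R Rd : Matrix (Fin n) (Fin n) ℂ)
    (hP : IsGroupInverse P Pd) (hR : IsGroupInverse R Rd)
    (hc : (1 - R * Rd) * Q * (1 - P * Pd) = 0) :
    IsGroupInverse (fromBlocks P 0 Q R)
      (fromBlocks Pd 0
        (Rd * Rd * Q * (1 - P * Pd) + (1 - R * Rd) * Q * (Pd * Pd) - Rd * Q * Pd) Rd) := by
  obtain ⟨pa, pb, pc⟩ := hP
  obtain ⟨ra, rb, rc⟩ := hR
  -- P-side reduction lemmas (square m ring)
  have pp3 : ∀ x : Matrix (Fin m) (Fin m) ℂ, Pd * (P * x) = P * (Pd * x) := by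
    intro x; rw [← Matrix.mul_assoc, ← pc, Matrix.mul_assoc]
  have c1 : Pd * P = P * Pd := pc.symm
  have c2 : P * (P * Pd) = P := by rw [pc, ← Matrix.mul_assoc, pa]
  have c3 : Pd * (P * Pd) = Pd := by rw [← Matrix.mul_assoc, pb]
  have c4 : P * (Pd * Pd) = Pd := by rw [← Matrix.mul_assoc, pc, Matrix.mul_assoc,
    ← Matrix.mul_assoc, pb]
  have pp1 : ∀ x : Matrix (Fin m) (Fin m) ℂ, P * (P * (Pd * x)) = P * x := by
    intro x; rw [← Matrix.mul_assoc, ← Matrix.mul_assoc, Matrix.mul_assoc P P Pd, c2]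
  have pp2 : ∀ x : Matrix (Fin m) (Fin m) ℂ, Pd * (P * (Pd * x)) = Pd * x := by
    intro x; rw [← Matrix.mul_assoc, ← Matrix.mul_assoc, Matrix.mul_assoc Pd P Pd, c3]
  have pp4 : ∀ x : Matrix (Fin m) (Fin m) ℂ, P * (Pd * (Pd * x)) = Pd * x := by
    intro x; rw [← Matrix.mul_assoc, ← Matrix.mul_assoc, Matrix.mul_assoc P Pd Pd, c4]
  -- R-side reduction lemmas (left-acting on n×m matrices)
  have qq3 : ∀ x : Matrix (Fin n) (Fin m) ℂ, Rd * (R * x) = R * (Rd * x) := by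
    intro x; rw [← Matrix.mul_assoc, ← rc, Matrix.mul_assoc]
  have d2 : R * (R * Rd) = R := by rw [rc, ← Matrix.mul_assoc, ra]
  have d3 : Rd * (R * Rd) = Rd := by rw [← Matrix.mul_assoc, rb]
  have d4 : R * (Rd * Rd) = Rd := by rw [← Matrix.mul_assoc, rc, Matrix.mul_assoc,
    ← Matrix.mul_assoc, rb]
  have qq1 : ∀ x : Matrix (Fin n) (Fin m) ℂ, R * (R * (Rd * x)) = R * x := by
    intro x; rw [← Matrix.mul_assoc, ← Matrix.mul_assoc, Matrix.mul_assoc R R Rd, d2]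
  have qq2 : ∀ x : Matrix (Fin n) (Fin m) ℂ, Rd * (R * (Rd * x)) = Rd * x := by
    intro x; rw [← Matrix.mul_assoc, ← Matrix.mul_assoc, Matrix.mul_assoc Rd R Rd, d3]
  have qq4 : ∀ x : Matrix (Fin n) (Fin m) ℂ, R * (Rd * (Rd * x)) = Rd * x := by
    intro x; rw [← Matrix.mul_assoc, ← Matrix.mul_assoc, Matrix.mul_assoc R Rd Rd, d4]
  have hc0 : Q - Q * (P * Pd) - R * (Rd * Q) + R * (Rd * (Q * (P * Pd))) = 0 := by
    have := hc
    simp only [Matrix.sub_mul, Matrix.mul_sub, Matrix.one_mul, Matrix.mul_one,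
      Matrix.mul_assoc] at this
    calc Q - Q * (P * Pd) - R * (Rd * Q) + R * (Rd * (Q * (P * Pd)))
        = Q - R * (Rd * Q) - (Q * (P * Pd) - R * (Rd * (Q * (P * Pd)))) := by abel
      _ = 0 := this
  have hQ : Q = Q * (P * Pd) + R * (Rd * Q) - R * (Rd * (Q * (P * Pd))) := by
    refine sub_eq_zero.mp ?_
    rw [← hc0]; abel
  set X : Matrix (Fin n) (Fin m) ℂ :=
    Rd * Rd * Q * (1 - P * Pd) + (1 - R * Rd) * Q * (Pd * Pd) - Rd * Q * Pd with hX
  refine ⟨?_, ?_, ?_⟩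
  · show (fromBlocks P 0 Q R) * (fromBlocks Pd 0 X Rd) * (fromBlocks P 0 Q R) = _
    rw [Matrix.fromBlocks_multiply, Matrix.fromBlocks_multiply, Matrix.fromBlocks_inj]
    refine ⟨?_, ?_, ?_, ?_⟩ <;>
      simp only [hX, Matrix.mul_zero, Matrix.zero_mul, add_zero, zero_add, Matrix.add_mul,
        Matrix.mul_add, Matrix.sub_mul, Matrix.mul_sub, Matrix.one_mul, Matrix.mul_one,
        Matrix.mul_assoc, pp3, pp1, pp2, pp4, c1, c2, c3, c4, qq3, qq1, qq2, qq4, d2, d3, d4]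
    · abel
    · conv_rhs => rw [hQ]
      abel
    · rw [← Matrix.mul_assoc, ra]
  · show (fromBlocks Pd 0 X Rd) * (fromBlocks P 0 Q R) * (fromBlocks Pd 0 X Rd) = _
    rw [Matrix.fromBlocks_multiply, Matrix.fromBlocks_multiply, Matrix.fromBlocks_inj]
    refine ⟨?_, ?_, ?_, ?_⟩ <;>
      simp only [hX, Matrix.mul_zero, Matrix.zero_mul, add_zero, zero_add, Matrix.add_mul,
        Matrix.mul_add, Matrix.sub_mul, Matrix.mul_sub, Matrix.one_mul, Matrix.mul_one,
        Matrix.mul_assoc, pp3, pp1, pp2, pp4, c1, c2, c3, c4, qq3, qq1, qq2, qq4, d2, d3, d4]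
    · abel
    · abel
  · show (fromBlocks P 0 Q R) * (fromBlocks Pd 0 X Rd) = (fromBlocks Pd 0 X Rd) * (fromBlocks P 0 Q R)
    rw [Matrix.fromBlocks_multiply, Matrix.fromBlocks_multiply, Matrix.fromBlocks_inj]
    refine ⟨?_, ?_, ?_, ?_⟩ <;>
      simp only [hX, Matrix.mul_zero, Matrix.zero_mul, add_zero, zero_add, Matrix.add_mul,
        Matrix.mul_add, Matrix.sub_mul, Matrix.mul_sub, Matrix.one_mul, Matrix.mul_one,
        Matrix.mul_assoc, pp3, pp1, pp2, pp4, c1, c2, c3, c4, qq3, qq1, qq2, qq4, d2, d3, d4]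
    · abel
    · abel
    · exact rc

set_option maxHeartbeats 1000000 in
theorem block_matrix_group_invertible₁ {m n : ℕ}
    (A Ad : Matrix (Fin m) (Fin m) ℂ) (B : Matrix (Fin n) (Fin m) ℂ)
    (C : Matrix (Fin m) (Fin n) ℂ) (D Dd : Matrix (Fin n) (Fin n) ℂ)
    (hA : IsGroupInverse A Ad) (hD : IsGroupInverse D Dd)
    (l : ℂ) (hl : l ≠ -1)
    (h1 : B * (1 - A * Ad) = 0) (h2 : C * (1 - D * Dd) = 0)
    (h3 : A * C * Dd = l • C) (h4 : B * C * Dd = l • D) :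
    ∃ Y, IsGroupInverse (Matrix.fromBlocks A C B D) Y := by
  obtain ⟨aa, ab, ac⟩ := hA
  obtain ⟨da, db, dc⟩ := hD
  have h1l : (1 + l) ≠ 0 := fun h => hl (by linear_combination h)
  have hB : B * (A * Ad) = B := by
    have := h1; rw [Matrix.mul_sub, Matrix.mul_one, sub_eq_zero] at this; exact this.symm
  have hC : C * (D * Dd) = C := by
    have := h2; rw [Matrix.mul_sub, Matrix.mul_one, sub_eq_zero] at this; exact this.symm
  have hCDdD : C * Dd * D = C := by
    rw [Matrix.mul_assoc, ← dc, hC]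
  have hAC : A * C = l • (C * D) := by
    calc A * C = A * (C * (D * Dd)) := by rw [hC]
      _ = A * C * Dd * D := by rw [dc]; simp only [Matrix.mul_assoc]
      _ = l • (C * D) := by rw [h3, Matrix.smul_mul]
  have hBC : B * C = l • (D * D) := by
    calc B * C = B * (C * (D * Dd)) := by rw [hC]
      _ = B * C * Dd * D := by rw [dc]; simp only [Matrix.mul_assoc]
      _ = l • (D * D) := by rw [h4, Matrix.smul_mul]
  set P : Matrix (Fin m) (Fin m) ℂ := A - C * Dd * B with hPdef
  have hPC : P * C = 0 := by
    rw [hPdef, Matrix.sub_mul]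
    calc A * C - C * Dd * B * C
        = l • (C * D) - C * Dd * (l • (D * D)) := by rw [hAC, Matrix.mul_assoc (C * Dd) B C, hBC]
      _ = l • (C * D) - l • (C * Dd * D * D) := by rw [Matrix.mul_smul]; simp only [Matrix.mul_assoc]
      _ = 0 := by rw [hCDdD, sub_self]
  have hPAAd : P * (A * Ad) = P := by
    rw [hPdef, Matrix.sub_mul, Matrix.mul_assoc (C * Dd) B (A * Ad), hB, ac,
      ← Matrix.mul_assoc A Ad A, aa]
  have hAdAdA : Ad * Ad * A = Ad := by
    rw [Matrix.mul_assoc, ← ac, ← Matrix.mul_assoc, ab]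
  have hAdC0 : l = 0 → Ad * C = 0 := by
    intro h0
    have : Ad * Ad * (A * C) = Ad * C := by rw [← Matrix.mul_assoc, hAdAdA]
    rw [← this, hAC, h0, zero_smul, Matrix.mul_zero]
  have hPAdC : P * Ad * C = 0 := by
    rcases eq_or_ne l 0 with h0 | h0
    · rw [Matrix.mul_assoc, hAdC0 h0, Matrix.mul_zero]
    · have key : l • (P * Ad * C) = 0 := by
        calc l • (P * Ad * C) = P * Ad * (l • C) := by rw [Matrix.mul_smul]
          _ = P * Ad * A * C * Dd := by rw [← h3]; simp only [Matrix.mul_assoc]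
          _ = P * C * Dd := by rw [Matrix.mul_assoc P Ad A, ← ac, hPAAd]
          _ = 0 := by rw [hPC, Matrix.zero_mul]
      exact (smul_eq_zero.mp key).resolve_left h0
  have hPAdAdA : P * Ad * Ad * A = P * Ad := by
    rw [Matrix.mul_assoc (P * Ad) Ad A, Matrix.mul_assoc P Ad (Ad * A),
      ← Matrix.mul_assoc Ad Ad A, hAdAdA]
  have hPAdAdC : P * Ad * Ad * C = 0 := by
    rcases eq_or_ne l 0 with h0 | h0
    · rw [Matrix.mul_assoc (P * Ad) Ad C, hAdC0 h0, Matrix.mul_zero]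
    · have key : l • (P * Ad * Ad * C) = 0 := by
        calc l • (P * Ad * Ad * C) = P * Ad * Ad * (l • C) := by rw [Matrix.mul_smul]
          _ = P * Ad * Ad * A * C * Dd := by rw [← h3]; simp only [Matrix.mul_assoc]
          _ = P * Ad * C * Dd := by rw [hPAdAdA]
          _ = 0 := by rw [hPAdC, Matrix.zero_mul]
      exact (smul_eq_zero.mp key).resolve_left h0
  have expand : ∀ Y : Matrix (Fin m) (Fin m) ℂ, Y * P = Y * A - Y * C * (Dd * B) := by
    intro Y; rw [hPdef, Matrix.mul_sub]; simp only [Matrix.mul_assoc]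
  have hPAdP : P * Ad * P = P := by
    rw [expand (P * Ad), hPAdC, Matrix.zero_mul, sub_zero, Matrix.mul_assoc P Ad A, ← ac, hPAAd]
  have hPP : P * P = P * A := by
    rw [expand P, hPC, Matrix.zero_mul, sub_zero]
  have hPPd : P * (P * Ad * Ad) = P * Ad := by
    rw [← Matrix.mul_assoc, ← Matrix.mul_assoc, hPP, Matrix.mul_assoc P A Ad, hPAAd]
  have hPgi : IsGroupInverse P (P * Ad * Ad) := by
    have hl1 := hPPd
    have hl2 : (P * Ad * Ad) * P = P * Ad := by
      rw [expand (P * Ad * Ad), hPAdAdC, Matrix.zero_mul, sub_zero, hPAdAdA]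
    refine ⟨?_, ?_, ?_⟩
    · rw [hl1, hPAdP]
    · rw [hl2, ← Matrix.mul_assoc, ← Matrix.mul_assoc, hPAdP]
    · rw [hl1, hl2]
  have hBP : B * P = B * A - l • (D * B) := by
    rw [hPdef, Matrix.mul_sub]
    congr 1
    calc B * (C * Dd * B) = B * C * Dd * B := by simp only [Matrix.mul_assoc]
      _ = (l • D) * B := by rw [h4]
      _ = l • (D * B) := by rw [Matrix.smul_mul]
  have hBPA : B * (P * Ad) = B - l • (D * (B * Ad)) := by
    rw [← Matrix.mul_assoc, hBP, Matrix.sub_mul, Matrix.mul_assoc B A Ad, hB,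
      Matrix.smul_mul, Matrix.mul_assoc D B Ad]
  have hcond' : (1 - D * Dd) * (B * (1 - P * Ad)) = 0 := by
    have e1 : B * (1 - P * Ad) = l • (D * (B * Ad)) := by
      rw [Matrix.mul_sub, Matrix.mul_one, hBPA, sub_sub_cancel]
    rw [e1, Matrix.mul_smul, Matrix.sub_mul, Matrix.one_mul,
      ← Matrix.mul_assoc (D * Dd) D (B * Ad), da, sub_self, smul_zero]
  have hsm : ((1+l) • D) * ((1+l)⁻¹ • Dd) = D * Dd := by
    rw [Matrix.smul_mul, Matrix.mul_smul, smul_smul, mul_inv_cancel₀ h1l, one_smul]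
  have hms : ((1+l)⁻¹ • Dd) * ((1+l) • D) = Dd * D := by
    rw [Matrix.smul_mul, Matrix.mul_smul, smul_smul, inv_mul_cancel₀ h1l, one_smul]
  have hDgi : IsGroupInverse ((1+l) • D) ((1+l)⁻¹ • Dd) := by
    refine ⟨?_, ?_, ?_⟩
    · rw [hsm, Matrix.mul_smul, da]
    · rw [hms, Matrix.mul_smul, db]
    · rw [hsm, hms, dc]
  have hcond : (1 - ((1+l) • D) * ((1+l)⁻¹ • Dd)) * B * (1 - P * (P * Ad * Ad)) = 0 := by
    rw [hsm, hPPd, Matrix.mul_assoc, hcond']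
  have hNW := tri_gi P (P * Ad * Ad) B ((1+l) • D) ((1+l)⁻¹ • Dd) hPgi hDgi hcond
  set N : Matrix (Fin m ⊕ Fin n) (Fin m ⊕ Fin n) ℂ :=
    Matrix.fromBlocks P 0 B ((1+l) • D) with hN
  set S : Matrix (Fin m ⊕ Fin n) (Fin m ⊕ Fin n) ℂ :=
    Matrix.fromBlocks 1 (C * Dd) 0 1 with hS
  set Si : Matrix (Fin m ⊕ Fin n) (Fin m ⊕ Fin n) ℂ :=
    Matrix.fromBlocks 1 (-(C * Dd)) 0 1 with hSi
  have hSSi : S * Si = 1 := by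
    rw [hS, hSi, Matrix.fromBlocks_multiply]
    simp only [Matrix.one_mul, Matrix.mul_one, Matrix.zero_mul, Matrix.mul_zero,
      add_zero, zero_add, neg_add_cancel, add_neg_cancel]
    exact Matrix.fromBlocks_one
  have hSiS : Si * S = 1 := by
    rw [hS, hSi, Matrix.fromBlocks_multiply]
    simp only [Matrix.one_mul, Matrix.mul_one, Matrix.zero_mul, Matrix.mul_zero,
      add_zero, zero_add, neg_add_cancel, add_neg_cancel]
    exact Matrix.fromBlocks_one
  have hM : Matrix.fromBlocks A C B D = S * N * Si := by
    rw [hS, hSi, hN, Matrix.fromBlocks_multiply, Matrix.fromBlocks_multiply,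
      Matrix.fromBlocks_inj]
    refine ⟨?_, ?_, ?_, ?_⟩ <;>
      simp only [Matrix.one_mul, Matrix.mul_one, Matrix.zero_mul, Matrix.mul_zero,
        add_zero, zero_add]
    · rw [hPdef]; abel
    · have eP : P + C * Dd * B = A := by rw [hPdef]; abel
      rw [eP, Matrix.mul_neg, Matrix.mul_smul, ← Matrix.mul_assoc A C Dd, h3,
        hCDdD]
      module
    · rw [Matrix.mul_neg, ← Matrix.mul_assoc B C Dd, h4]
      module
  have hfin := conj_gi hSSi hSiS hNW
  rw [← hM] at hfin
  exact ⟨_, hfin⟩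
end

section
/- Let B ∈ ℂ^{n×m} and C ∈ ℂ^{m×n} satisfy rank(B) = rank(C) = rank(BC) = rank(CB). Then the block matrix K = [[0, C], [B, 0]] ∈ ℂ^{(m+n)×(m+n)} satisfies rank(K²) = rank(K), and hence K is group invertible. -/
/-- Factor a linear map through another with larger range. -/
lemma exists_comp_eq_of_range_le {K V W U : Type*} [Field K] [AddCommGroup V] [Module K V]
    [AddCommGroup W] [Module K W] [AddCommGroup U] [Module K U]
    (f : V →ₗ[K] W) (g : U →ₗ[K] W) (h : LinearMap.range f ≤ LinearMap.range g) :
    ∃ h' : V →ₗ[K] U, g ∘ₗ h' = f := by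
  obtain ⟨s, hs⟩ := g.rangeRestrict.exists_rightInverse_of_surjective g.range_rangeRestrict
  refine ⟨s ∘ₗ f.codRestrict (LinearMap.range g) (fun x => h ⟨x, rfl⟩), ?_⟩
  ext x
  have : g.rangeRestrict (s (f.codRestrict (LinearMap.range g) (fun x => h ⟨x, rfl⟩) x)) =
      f.codRestrict (LinearMap.range g) (fun x => h ⟨x, rfl⟩) x := by
    rw [← LinearMap.comp_apply, hs]; rfl
  simpa using congrArg Subtype.val this

/-- If `(M * D).rank = M.rank`, then `M` factors as `M * D * U`. -/
lemma exists_factor_of_rank_eq {k l p : Type*} [Fintype k] [Fintype l] [Fintype p]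
    [DecidableEq k] [DecidableEq l] [DecidableEq p]
    (M : Matrix k l ℂ) (D : Matrix l p ℂ) (h : (M * D).rank = M.rank) :
    ∃ U : Matrix p l ℂ, M * D * U = M := by
  have hle : LinearMap.range (M * D).mulVecLin ≤ LinearMap.range M.mulVecLin := by
    rw [Matrix.mulVecLin_mul]; exact LinearMap.range_comp_le_range _ _
  have heq : LinearMap.range M.mulVecLin ≤ LinearMap.range (M * D).mulVecLin := by
    rw [Submodule.eq_of_le_of_finrank_eq hle h]
  obtain ⟨h', hh'⟩ := exists_comp_eq_of_range_le M.mulVecLin (M * D).mulVecLin heq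
  refine ⟨LinearMap.toMatrix' h', ?_⟩
  apply Matrix.toLin'.injective
  rw [Matrix.toLin'_apply', Matrix.mulVecLin_mul, ← Matrix.toLin'_apply',
    ← Matrix.toLin'_apply' (LinearMap.toMatrix' h'), Matrix.toLin'_toMatrix',
    Matrix.toLin'_apply', hh']
  exact (Matrix.toLin'_apply' M).symm

/-- Ring lemma: if `a = a²u` and `a = va²` then `vau` is a group inverse of `a`. -/
lemma isGroupInverse_of_factors {A : Type*} [Ring A] (a u v : A)
    (hu : a * a * u = a) (hv : v * (a * a) = a) :
    IsGroupInverse a (v * a * u) := by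
  have hva : v * a = a * u := by
    calc v * a = v * (a * a * u) := by rw [hu]
      _ = v * (a * a) * u := by noncomm_ring
      _ = a * u := by rw [hv]
  have hap : a * (a * u) = a := by rw [← mul_assoc, hu]
  have hpa : (a * u) * a = a := by rw [← hva, mul_assoc, hv]
  have hay : a * (v * a * u) = a * u := by
    calc a * (v * a * u) = a * (v * a) * u := by noncomm_ring
      _ = a * (a * u) * u := by rw [hva]
      _ = a * u := by rw [hap]
  have hya : (v * a * u) * a = a * u := by
    calc (v * a * u) * a = v * ((a * u) * a) := by noncomm_ring
      _ = v * a := by rw [hpa]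
      _ = a * u := hva
  refine ⟨?_, ?_, ?_⟩
  · rw [mul_assoc, hya, hap]
  · calc v * a * u * a * (v * a * u) = a * u * (v * a * u) := by rw [hya]
      _ = a * u * (a * u * u) := by rw [hva]
      _ = a * u * a * (u * u) := by noncomm_ring
      _ = a * (u * u) := by rw [hpa]
      _ = a * u * u := by noncomm_ring
      _ = v * a * u := by rw [hva]
  · rw [hay, hya]

theorem antidiagonal_block_group_invertible {m n : ℕ}
    (B : Matrix (Fin n) (Fin m) ℂ) (C : Matrix (Fin m) (Fin n) ℂ)
    (h1 : B.rank = C.rank) (h2 : C.rank = (B * C).rank)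
    (h3 : (B * C).rank = (C * B).rank) :
    ((Matrix.fromBlocks 0 C B 0 : Matrix (Fin m ⊕ Fin n) (Fin m ⊕ Fin n) ℂ) *
        Matrix.fromBlocks 0 C B 0).rank =
      (Matrix.fromBlocks 0 C B 0 : Matrix (Fin m ⊕ Fin n) (Fin m ⊕ Fin n) ℂ).rank ∧
    ∃ Y, IsGroupInverse (Matrix.fromBlocks 0 C B 0 :
        Matrix (Fin m ⊕ Fin n) (Fin m ⊕ Fin n) ℂ) Y := by
  set K : Matrix (Fin m ⊕ Fin n) (Fin m ⊕ Fin n) ℂ := Matrix.fromBlocks 0 C B 0 with hK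
  -- U₁ : C*B*U₁ = C
  obtain ⟨U₁, hU₁⟩ := exists_factor_of_rank_eq C B (by rw [← h3, ← h2])
  -- U₂ : B*C*U₂ = B
  obtain ⟨U₂, hU₂⟩ := exists_factor_of_rank_eq B C (by rw [← h2, ← h1])
  -- V₁.transpose : C.transpose*B.transpose*X = C.transpose, i.e. X.transpose*(B*C) = C
  obtain ⟨X₁, hX₁⟩ := exists_factor_of_rank_eq C.transpose B.transpose (by
    rw [← Matrix.transpose_mul, Matrix.rank_transpose, Matrix.rank_transpose, ← h2])
  obtain ⟨X₂, hX₂⟩ := exists_factor_of_rank_eq B.transpose C.transpose (by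
    rw [← Matrix.transpose_mul, Matrix.rank_transpose, Matrix.rank_transpose, h1, h2, h3])
  have hV₁ : X₁.transpose * (B * C) = C := by
    have := congrArg Matrix.transpose hX₁
    simpa [Matrix.transpose_mul, Matrix.mul_assoc] using this
  have hV₂ : X₂.transpose * (C * B) = B := by
    have := congrArg Matrix.transpose hX₂
    simpa [Matrix.transpose_mul, Matrix.mul_assoc] using this
  have hKsq : K * K = Matrix.fromBlocks (C * B) 0 0 (B * C) := by
    simp [hK, Matrix.fromBlocks_multiply]
  have hu : K * K * Matrix.fromBlocks 0 U₁ U₂ 0 = K := by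
    rw [hKsq, hK]
    simp [Matrix.fromBlocks_multiply, hU₁, hU₂, Matrix.mul_assoc]
  have hv : Matrix.fromBlocks 0 X₁.transpose X₂.transpose 0 * (K * K) = K := by
    rw [hKsq, hK]
    simp [Matrix.fromBlocks_multiply, hV₁, hV₂]
  constructor
  · refine le_antisymm (Matrix.rank_mul_le_left K K) ?_
    calc K.rank = (Matrix.fromBlocks 0 X₁.transpose X₂.transpose 0 * (K * K)).rank := by rw [hv]
      _ ≤ (K * K).rank := Matrix.rank_mul_le_right _ _
  · exact ⟨_, isGroupInverse_of_factors K _ _ hu hv⟩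
end
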